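/- (Remark 7.7, case b = 2.) Let p > 3 be a prime, let k and s be integers, and let h > 0 be a real number with (⌈(p−3)h⌉ − 1)/(2(p−1)) ≥ 1. Then there exists an integer k' such that: (a) k' ≡ k (mod (p−1)·p^{⌊m_p^{(2)}(h)⌋}); (b) k'−1 ≢ s (mod p+1); and (c) ⌊(k'−2)/(p−1)⌋ < h < (k'−2)/2. -/

import Mathlib

/-!
Write `M = (p - 1) p^m` with `m = ⌊m_p^{(2)}(h)⌋`. Since `p^m` is at most the quantity whose
logarithm defines `m_p^{(2)}(h)`, the hypothesis gives `2M < (p - 3)h`, i.e. the window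
`2h + 2 < k' < (p - 1)h + 2`, which implies (c), is longer than two periods `M`.
It therefore contains two consecutive members `t`, `t + M` of the class of `k` modulo `M`.
As `p + 1` is coprime to `p` and larger than `p - 1`, it does not divide `M`, so `t - 1` and
`t + M - 1` are incongruent modulo `p + 1` and one of them avoids the class of `s`.
-/

/-- `m_p^{(2)}(h) = log_p((⌈(p−3)h⌉ − 1)/(2(p−1)))` if `(⌈(p−3)h⌉ − 1)/(2(p−1)) ≥ 1`,
and `0` otherwise. -/
noncomputable def mp2 (p : ℕ) (h : ℝ) : ℝ :=
  if 1 ≤ ((⌈((p : ℝ) - 3) * h⌉ : ℝ) - 1) / (2 * ((p : ℝ) - 1)) then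
    Real.logb p (((⌈((p : ℝ) - 3) * h⌉ : ℝ) - 1) / (2 * ((p : ℝ) - 1)))
  else 0

open Real

theorem pow_toNat_floor_logb_le (b : ℕ) {r : ℝ} (hr : 1 ≤ r) :
    (b : ℝ) ^ ⌊logb b r⌋.toNat ≤ r := by
  rw [floor_logb_natCast (by linarith), Int.log_of_one_le_right b hr, Int.toNat_natCast]
  have hfloor : ⌊r⌋₊ ≠ 0 := (Nat.floor_pos.mpr hr).ne'
  calc (b : ℝ) ^ Nat.log b ⌊r⌋₊ = ((b ^ Nat.log b ⌊r⌋₊ : ℕ) : ℝ) := by push_cast; rfl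
    _ ≤ ⌊r⌋₊ := by exact_mod_cast Nat.pow_log_le_self b hfloor
    _ ≤ r := Nat.floor_le (by linarith)

theorem Int.exists_modEq_mem_Ioc {M : ℤ} (hM : 0 < M) (k : ℤ) (a : ℝ) :
    ∃ t : ℤ, t ≡ k [ZMOD M] ∧ a < t ∧ (t : ℝ) ≤ a + M := by
  obtain ⟨hlo, hhi⟩ := toIocMod_mem_Ioc hM ⌊a⌋ k
  refine ⟨toIocMod hM ⌊a⌋ k, ?_, ?_, ?_⟩
  · exact Int.modEq_iff_dvd.mpr (Dvd.intro_left _ (self_sub_toIocMod_eq_mul hM ⌊a⌋ k).symm)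
  · exact (Int.lt_floor_add_one a).trans_le (by exact_mod_cast hlo)
  · calc ((toIocMod hM ⌊a⌋ k : ℤ) : ℝ) ≤ ((⌊a⌋ + M : ℤ) : ℝ) := by exact_mod_cast hhi
      _ ≤ a + M := by push_cast; linarith [Int.floor_le a]

theorem Int.exists_modEq_not_modEq_mem_Ioo {M n : ℤ} (hM : 0 < M) (hn : ¬ n ∣ M) (k s : ℤ)
    {a b : ℝ} (hab : a + 2 * M < b) :
    ∃ k' : ℤ, k' ≡ k [ZMOD M] ∧ ¬ k' ≡ s [ZMOD n] ∧ a < k' ∧ (k' : ℝ) < b := by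
  obtain ⟨t, htk, hat, htb⟩ := Int.exists_modEq_mem_Ioc hM k a
  have hM' : (0 : ℝ) < M := Int.cast_pos.mpr hM
  by_cases hts : t ≡ s [ZMOD n]
  · refine ⟨t + M, Int.add_modEq_right.trans htk, ?_, ?_, ?_⟩
    · exact fun hMs => hn (Int.add_modEq_left_iff.mp (hMs.trans hts.symm))
    · push_cast; linarith
    · push_cast; linarith
  · exact ⟨t, htk, hts, hat, by linarith⟩

theorem not_add_one_dvd_sub_one_mul_pow {p : ℤ} (hp : 1 < p) (m : ℕ) :
    ¬ p + 1 ∣ (p - 1) * p ^ m := by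
  intro hdvd
  have hcop : IsCoprime (p + 1) (p ^ m) := IsCoprime.pow_right ⟨1, -1, by ring⟩
  have := Int.le_of_dvd (by omega) (hcop.dvd_of_dvd_mul_right hdvd)
  omega

theorem two_mul_sub_one_mul_pow_lt {p : ℕ} (hp : 1 < p) {h : ℝ}
    (hstar : 1 ≤ ((⌈((p : ℝ) - 3) * h⌉ : ℝ) - 1) / (2 * ((p : ℝ) - 1))) :
    2 * (((p : ℝ) - 1) * (p : ℝ) ^ ⌊mp2 p h⌋.toNat) < ((p : ℝ) - 3) * h := by
  have hp' : (0 : ℝ) < 2 * ((p : ℝ) - 1) := by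
    have : (1 : ℝ) < p := by exact_mod_cast hp
    linarith
  have hpow := pow_toNat_floor_logb_le p hstar
  rw [le_div_iff₀ hp'] at hpow
  rw [mp2, if_pos hstar]
  linarith [Int.ceil_lt_add_one (((p : ℝ) - 3) * h)]

theorem floor_div_lt_of_lt_mul {c h x : ℝ} (hc : 0 < c) (hx : x < c * h) :
    (⌊x / c⌋ : ℝ) < h :=
  (Int.floor_le _).trans_lt ((div_lt_iff₀ hc).mpr (by linarith))

theorem exists_weight_with_deep_congruence_b2_general (p : ℕ) (hp3 : 3 < p)
    (k s : ℤ) (h : ℝ)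
    (hstar : 1 ≤ ((⌈((p : ℝ) - 3) * h⌉ : ℝ) - 1) / (2 * ((p : ℝ) - 1))) :
    ∃ k' : ℤ,
      Int.ModEq (((p : ℤ) - 1) * (p : ℤ) ^ (⌊mp2 p h⌋.toNat)) k' k ∧
      ¬ Int.ModEq ((p : ℤ) + 1) (k' - 1) s ∧
      ((⌊((k' : ℝ) - 2) / ((p : ℝ) - 1)⌋ : ℝ) < h ∧ h < ((k' : ℝ) - 2) / 2) := by
  have hp : 1 < p := by omega
  set M : ℤ := ((p : ℤ) - 1) * (p : ℤ) ^ ⌊mp2 p h⌋.toNat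
  have hM : 0 < M := mul_pos (by omega) (by positivity)
  have hwindow : (2 * h + 2) + 2 * M < ((p : ℝ) - 1) * h + 2 := by
    have := two_mul_sub_one_mul_pow_lt hp hstar
    push_cast [M]
    linarith
  obtain ⟨k', hk'k, hk's, hlo, hhi⟩ := Int.exists_modEq_not_modEq_mem_Ioo hM
    (not_add_one_dvd_sub_one_mul_pow (by exact_mod_cast hp) _) k (s + 1) hwindow
  refine ⟨k', hk'k, fun hs => hk's (by simpa using hs.add_right 1), ?_, by linarith⟩
  exact floor_div_lt_of_lt_mul (by norm_num; exact_mod_cast hp) (by linarith)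

/-- **Remark 7.7, case b = 2.** Let `p > 3` be prime, `k, s` integers, and
`h > 0` a real with `(⌈(p−3)h⌉ − 1)/(2(p−1)) ≥ 1`. Then there is an integer `k'` with
(a) `k' ≡ k (mod (p−1)p^⌊m_p^{(2)}(h)⌋)`, (b) `k'−1 ≢ s (mod p+1)`, and
(c) `⌊(k'−2)/(p−1)⌋ < h < (k'−2)/2`. -/
theorem exists_weight_with_deep_congruence_b2 (p : ℕ) (hp : p.Prime) (hp3 : 3 < p)
    (k s : ℤ) (h : ℝ) (hh : 0 < h)
    (hstar : 1 ≤ ((⌈((p : ℝ) - 3) * h⌉ : ℝ) - 1) / (2 * ((p : ℝ) - 1))) :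
    ∃ k' : ℤ,
      Int.ModEq (((p : ℤ) - 1) * (p : ℤ) ^ (⌊mp2 p h⌋.toNat)) k' k ∧
      ¬ Int.ModEq ((p : ℤ) + 1) (k' - 1) s ∧
      ((⌊((k' : ℝ) - 2) / ((p : ℝ) - 1)⌋ : ℝ) < h ∧ h < ((k' : ℝ) - 2) / 2) :=
  exists_weight_with_deep_congruence_b2_general p hp3 k s h hstar
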